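/- Let D be a directed network on node set N. For every node i ∈ N, the middleman power measure satisfies 0 ≤ ν_i(D) ≤ 1. -/

import Mathlib

open Finset

variable {V : Type*} [Fintype V] [DecidableEq V]

/-- The arc set is irreflexive: no loops. -/
def IrreflArcs (D : Finset (V × V)) : Prop := ∀ i : V, (i, i) ∉ D

/-- `l` is an `(i,j)`-path in `D`: a list of pairwise distinct nodes, of length at
least 2, starting at `i`, ending at `j`, consecutive nodes joined by arcs of `D`. -/
def IsPath (D : Finset (V × V)) (i j : V) (l : List V) : Prop :=
  l.Nodup ∧ l.Chain' (fun a b => (a, b) ∈ D) ∧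
    l.head? = some i ∧ l.getLast? = some j ∧ 2 ≤ l.length

/-- Node `i` is connected to node `j`: there is at least one `(i,j)`-path. -/
def Conn (D : Finset (V × V)) (i j : V) : Prop := ∃ l : List V, IsPath D i j l

/-- The direct successors `s_i(D)`. -/
def dsucc (D : Finset (V × V)) (i : V) : Finset V := univ.filter fun j => (i, j) ∈ D

/-- The direct predecessors `p_i(D)`. -/
def dpred (D : Finset (V × V)) (i : V) : Finset V := univ.filter fun j => (j, i) ∈ D

open scoped Classical in
/-- The successor set `S_i(D)`: all nodes to which `i` is connected. -/
noncomputable def succC (D : Finset (V × V)) (i : V) : Finset V :=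
  univ.filter fun j => Conn D i j

open scoped Classical in
/-- The predecessor set `P_i(D)`: all nodes that are connected to `i`. -/
noncomputable def predC (D : Finset (V × V)) (i : V) : Finset V :=
  univ.filter fun j => Conn D j i

/-- An intermediary: at least one direct predecessor, at least one direct successor,
and at least two distinct direct neighbours. -/
def Intermediary (D : Finset (V × V)) (i : V) : Prop :=
  (dpred D i).Nonempty ∧ (dsucc D i).Nonempty ∧ 2 ≤ (dsucc D i ∪ dpred D i).card

/-- The induced subnetwork `D_M` on a node set `M`. -/
def inducedOn (D : Finset (V × V)) (M : Finset V) : Finset (V × V) :=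
  D.filter fun e => e.1 ∈ M ∧ e.2 ∈ M

/-- The reduced network `D − i`. -/
def removeNode (D : Finset (V × V)) (i : V) : Finset (V × V) :=
  D.filter fun e => e.1 ≠ i ∧ e.2 ≠ i

/-- The reduced network `D − C`, removing a node set `C`. -/
def removeNodes (D : Finset (V × V)) (C : Finset V) : Finset (V × V) :=
  D.filter fun e => e.1 ∉ C ∧ e.2 ∉ C

/-- `h` is an `(i,j)`-middleman: `i ≠ j`, `h ∉ {i,j}`, there is at least one
`(i,j)`-path, and `h` lies on every `(i,j)`-path. -/
def MmBetween (D : Finset (V × V)) (h i j : V) : Prop :=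
  i ≠ j ∧ h ≠ i ∧ h ≠ j ∧ Conn D i j ∧ ∀ l : List V, IsPath D i j l → h ∈ l

/-- `h` is a middleman: an intermediary that is an `(i,j)`-middleman for some pair. -/
def IsMiddleman (D : Finset (V × V)) (h : V) : Prop :=
  Intermediary D h ∧ ∃ i j : V, MmBetween D h i j

/-- The network is weakly connected. -/
def WeakConn (D : Finset (V × V)) : Prop :=
  ∀ i j : V, i ≠ j → Conn D i j ∨ Conn D j i

/-- The network `(M, D_M)` is weakly connected. -/
def WeakConnOn (D : Finset (V × V)) (M : Finset V) : Prop :=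
  ∀ i ∈ M, ∀ j ∈ M, i ≠ j → Conn (inducedOn D M) i j ∨ Conn (inducedOn D M) j i

/-- The network is strongly connected. -/
def StrongConn (D : Finset (V × V)) : Prop :=
  ∀ i j : V, i ≠ j → Conn D i j

/-- `M` is a component of `D`. -/
def IsComponent (D : Finset (V × V)) (M : Finset V) : Prop :=
  WeakConnOn D M ∧ ∀ i ∉ M, ¬ WeakConnOn D (insert i M)

/-- The coverage `Γ_i(D)` of an intermediary `i`. -/
noncomputable def coverage (D : Finset (V × V)) (i : V) : Finset (V × V) :=
  (predC D i ×ˢ succC D i).filter fun e => e.1 ≠ e.2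

/-- The extended coverage `Γ̄_j(D)` of a node `j`. -/
noncomputable def extCoverage (D : Finset (V × V)) (j : V) : Finset (V × V) :=
  insert j (predC D j) ×ˢ insert j (succC D j)

/-- Intermediary `i` is contested by the node set `C ⊆ N \ {i}`. -/
def ContestedBy (D : Finset (V × V)) (i : V) (C : Finset V) : Prop :=
  i ∉ C ∧ coverage D i ⊆ C.biUnion fun j => extCoverage (removeNode D i) j

/-- The brokerage `b_i(D)`. -/
noncomputable def brokerage (D : Finset (V × V)) (i : V) : ℤ :=
  (∑ j ∈ univ.erase i,
      (((succC D j).card : ℤ) - ((succC (removeNode D i) j).card : ℤ)))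
    - ((predC D i).card : ℤ)

/-- The maximal potential brokerage `B(D)`. -/
noncomputable def maxBrokerage (D : Finset (V × V)) : ℤ :=
  ∑ i : V, (((succC D i).card : ℤ) - ((dsucc D i).card : ℤ))

/-- The middleman power measure `ν_i(D) = b_i(D) / max{B(D), 1}`. -/
noncomputable def power (D : Finset (V × V)) (i : V) : ℚ :=
  (brokerage D i : ℚ) / ((max (maxBrokerage D) 1 : ℤ) : ℚ)

/-- The robustness `ρ_i(D)` of a middleman `i`. -/
noncomputable def robustness (D : Finset (V × V)) (i : V) : ℕ :=
  sInf {m : ℕ | ∃ D' : Finset (V × V),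
      IrreflArcs D' ∧ D ⊂ D' ∧ ¬ IsMiddleman D' i ∧ D'.card = m} - D.card

/-- The dual robustness `ρ*_i(D)` of a middleman `i`. -/
noncomputable def dualRobustness (D : Finset (V × V)) (i : V) : ℕ :=
  D.card - sSup {m : ℕ | ∃ D' : Finset (V × V),
      D' ⊆ D ∧ ¬ IsMiddleman D' i ∧ D'.card = m}

/-- The node-robustness `ψ_i(D)` of a middleman `i`. -/
noncomputable def nodeRobustness (D : Finset (V × V)) (i : V) : ℕ :=
  sInf {m : ℕ | ∃ C : Finset V,
      i ∉ C ∧ ¬ IsMiddleman (removeNodes D C) i ∧ C.card = m}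

/-- Direct neighbours in the underlying undirected network. -/
def nbr (D : Finset (V × V)) (i : V) : Finset V := dsucc D i ∪ dpred D i

/-- The local clustering coefficient `C_i = 2 L_i / (d_i (d_i − 1))`, computed here as
the number of ordered adjacent pairs of neighbours divided by `d_i (d_i − 1)`. -/
def clustering (D : Finset (V × V)) (i : V) : ℚ :=
  (((nbr D i ×ˢ nbr D i).filter fun e =>
      e.1 ≠ e.2 ∧ ((e.1, e.2) ∈ D ∨ (e.2, e.1) ∈ D)).card : ℚ)
    / (((nbr D i).card : ℚ) * (((nbr D i).card : ℚ) - 1))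

/-!
Deleting `i` can only destroy connections, and it destroys every connection `j → i`; hence
each `j ≠ i` loses at least `[i ∈ S_j(D)]` successors, and these add up to `#P_i(D)`, so
`b_i(D) ≥ 0`. Conversely, the direct successors of `j` other than `i` survive in `D − i`, so `j`
loses at most `#S_j(D) − #s_j(D) + [(j, i) ∈ D]` successors; there are `#p_i(D) ≤ #P_i(D)` arcs
`(j, i)`, so `b_i(D) ≤ B(D)`.
-/

section Connectivity

variable {α : Type*} {D D' : Finset (α × α)} {i j : α}

theorem Conn.mono (hD : D ⊆ D') (h : Conn D i j) : Conn D' i j := by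
  obtain ⟨l, hnodup, hchain, hhead, hlast, hlen⟩ := h
  exact ⟨l, hnodup, hchain.imp fun _ _ hab => hD hab, hhead, hlast, hlen⟩

theorem Conn.ne (h : Conn D i j) : i ≠ j := by
  obtain ⟨_ | ⟨a, _ | ⟨b, t⟩⟩, hnodup, -, hhead, hlast, hlen⟩ := h
  · simp at hlen
  · simp at hlen
  · obtain rfl : a = i := by simpa using hhead
    rintro rfl
    rw [List.getLast?_cons_cons] at hlast
    exact (List.nodup_cons.mp hnodup).1 (List.mem_of_getLast? hlast)

theorem Conn.exists_arc_into (h : Conn D i j) : ∃ k, (k, j) ∈ D := by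
  obtain ⟨l, -, hchain, -, hlast, hlen⟩ := h
  obtain ⟨l', rfl⟩ : ∃ l', l = l' ++ [j] := by
    obtain ⟨l', x, rfl⟩ := (List.eq_nil_or_concat l).resolve_left (by rintro rfl; simp at hlen)
    exact ⟨l', by simpa using hlast⟩
  obtain ⟨k, hk⟩ : ∃ k, l'.getLast? = some k :=
    Option.isSome_iff_exists.mp <| List.getLast?_isSome.mpr <|
      List.ne_nil_of_length_pos (by simp at hlen; omega)
  exact ⟨k, List.isChain_append.mp hchain |>.2.2 k hk j rfl⟩

theorem IrreflArcs.mono (hirr : IrreflArcs D) (hD : D' ⊆ D) : IrreflArcs D' :=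
  fun i hi => hirr i (hD hi)

theorem conn_of_mem (h : (i, j) ∈ D) (hne : i ≠ j) : Conn D i j :=
  ⟨[i, j], by simp [hne], List.isChain_pair.mpr h, rfl, rfl, le_rfl⟩

theorem conn_of_mem_of_irreflArcs (hirr : IrreflArcs D) (h : (i, j) ∈ D) : Conn D i j :=
  conn_of_mem h fun hij => hirr i (hij ▸ h)

end Connectivity

theorem Finset.card_add_ite_le_of_subset_erase {β : Type*} [DecidableEq β] {s t : Finset β}
    {a : β} (h : t ⊆ s.erase a) : #t + (if a ∈ s then 1 else 0) ≤ #s := by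
  have := card_le_card h
  split_ifs with ha
  · rw [← card_erase_add_one ha]; omega
  · rwa [erase_eq_of_notMem ha] at this

theorem Finset.card_le_card_add_ite_of_erase_subset {β : Type*} [DecidableEq β]
    {s t : Finset β} {a : β} (h : s.erase a ⊆ t) : #s ≤ #t + (if a ∈ s then 1 else 0) := by
  have := card_le_card h
  split_ifs with ha
  · rw [← card_erase_add_one ha]; omega
  · rwa [erase_eq_of_notMem ha] at this

section Brokerage

variable {α : Type*} [Fintype α] {D : Finset (α × α)} {i j : α}

@[simp] theorem mem_succC : j ∈ succC D i ↔ Conn D i j := by simp [succC]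

@[simp] theorem mem_predC : j ∈ predC D i ↔ Conn D j i := by simp [predC]

variable [DecidableEq α]

@[simp] theorem mem_dsucc : j ∈ dsucc D i ↔ (i, j) ∈ D := by simp [dsucc]

theorem dsucc_subset_succC (hirr : IrreflArcs D) (i : α) : dsucc D i ⊆ succC D i :=
  fun _ hj => mem_succC.mpr <| conn_of_mem_of_irreflArcs hirr (mem_dsucc.mp hj)

theorem succC_removeNode_subset_erase (i j : α) :
    succC (removeNode D i) j ⊆ (succC D j).erase i := by
  intro k hk
  have hconn := mem_succC.mp hk
  refine mem_erase.mpr ⟨?_, mem_succC.mpr (hconn.mono (filter_subset _ _))⟩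
  rintro rfl
  obtain ⟨l, hli⟩ := hconn.exists_arc_into
  exact (mem_filter.mp hli).2.2 rfl

theorem dsucc_erase_subset_succC_removeNode (hirr : IrreflArcs D) (hji : j ≠ i) :
    (dsucc D j).erase i ⊆ succC (removeNode D i) j := by
  intro k hk
  obtain ⟨hki, hjk⟩ := mem_erase.mp hk
  exact mem_succC.mpr <| conn_of_mem_of_irreflArcs (hirr.mono (filter_subset _ _)) <|
    mem_filter.mpr ⟨mem_dsucc.mp hjk, hji, hki⟩

theorem filter_mem_succC_eq_predC (i : α) :
    (univ.erase i).filter (fun j => i ∈ succC D j) = predC D i := by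
  ext j
  simp only [mem_filter, mem_erase, mem_univ, mem_succC, mem_predC, and_true]
  exact ⟨And.right, fun h => ⟨h.ne, h⟩⟩

theorem card_predC_le_sum_card_sub (i : α) :
    (#(predC D i) : ℤ) ≤
      ∑ j ∈ univ.erase i, ((#(succC D j) : ℤ) - #(succC (removeNode D i) j)) :=
  calc (#(predC D i) : ℤ) = ∑ j ∈ univ.erase i, if i ∈ succC D j then (1 : ℤ) else 0 := by
        rw [sum_boole, filter_mem_succC_eq_predC]
    _ ≤ _ := sum_le_sum fun j _ => by
        have := card_add_ite_le_of_subset_erase (succC_removeNode_subset_erase (D := D) i j)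
        split_ifs at this ⊢ <;> omega

theorem sum_card_sub_le (hirr : IrreflArcs D) (i : α) :
    ∑ j ∈ univ.erase i, ((#(succC D j) : ℤ) - #(succC (removeNode D i) j)) ≤
      ∑ j ∈ univ.erase i, ((#(succC D j) : ℤ) - #(dsucc D j)) + #(predC D i) := by
  have hpred : (univ.erase i).filter (fun j => i ∈ dsucc D j) ⊆ predC D i := fun j hj =>
    mem_predC.mpr <| mem_succC.mp <| dsucc_subset_succC hirr j (mem_filter.mp hj).2
  calc _ ≤ ∑ j ∈ univ.erase i,
        (((#(succC D j) : ℤ) - #(dsucc D j)) + if i ∈ dsucc D j then 1 else 0) :=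
        sum_le_sum fun j hj => by
          have := card_le_card_add_ite_of_erase_subset
            (dsucc_erase_subset_succC_removeNode hirr (ne_of_mem_erase hj))
          split_ifs at this ⊢ <;> omega
    _ ≤ _ := by
        rw [sum_add_distrib, sum_boole]
        have := card_le_card hpred
        omega

theorem brokerage_nonneg (i : α) : 0 ≤ brokerage D i := by
  have := card_predC_le_sum_card_sub (D := D) i
  rw [brokerage]
  linarith

theorem brokerage_le_maxBrokerage (hirr : IrreflArcs D) (i : α) :
    brokerage D i ≤ maxBrokerage D := by
  have hsum : ∑ j ∈ univ.erase i, ((#(succC D j) : ℤ) - #(dsucc D j)) ≤ maxBrokerage D :=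
    sum_le_sum_of_subset_of_nonneg (erase_subset i univ) fun j _ _ =>
      sub_nonneg.mpr <| by exact_mod_cast card_le_card (dsucc_subset_succC hirr j)
  have := sum_card_sub_le hirr i
  rw [brokerage]
  linarith

end Brokerage

/-- For every node `i`, the middleman power measure satisfies `0 ≤ ν_i(D) ≤ 1`. -/
theorem statement11 {V : Type*} [Fintype V] [DecidableEq V] (D : Finset (V × V))
    (hirr : IrreflArcs D) :
    ∀ i : V, 0 ≤ power D i ∧ power D i ≤ 1 := by
  intro i
  have hden : (1 : ℚ) ≤ ((max (maxBrokerage D) 1 : ℤ) : ℚ) := by exact_mod_cast le_max_right _ _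
  refine ⟨div_nonneg (by exact_mod_cast brokerage_nonneg i) (by linarith), ?_⟩
  rw [power, div_le_one (by linarith)]
  exact_mod_cast (brokerage_le_maxBrokerage hirr i).trans (le_max_left _ _)
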